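/- arXiv:2104.09110 — 2 statements merged into one kernel-verified Lean document; each statement's English description precedes it below -/
import Mathlib

section
/- Let J be a Euclidean Jordan algebra, c = (c₁,…,c_k) a CSOI, and T an element of the Lie algebra str(J) of the structure group such that T(J(c)) ⊆ J(c). Then T maps each Peirce subalgebra J_j = J(c_j,1) into itself. -/
open scoped RealInnerProductSpace

/-- A Euclidean Jordan algebra structure on a finite-dimensional real inner
product space: a commutative bilinear product satisfying the Jordan identity,
with unit `one`, such that the inner product is associative. -/
structure EJA (J : Type) [NormedAddCommGroup J] [InnerProductSpace ℝ J] : Type where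
  mul : J →ₗ[ℝ] J →ₗ[ℝ] J
  comm : ∀ x y : J, mul x y = mul y x
  jordan : ∀ x y : J, mul (mul x y) (mul x x) = mul x (mul y (mul x x))
  one : J
  one_mul : ∀ x : J, mul one x = x
  assoc_inner : ∀ x y z : J, ⟪mul x y, z⟫ = ⟪y, mul x z⟫

variable {J : Type} [NormedAddCommGroup J] [InnerProductSpace ℝ J] [FiniteDimensional ℝ J]

/-- The Peirce `μ`-eigenspace of the idempotent `c`. -/
noncomputable def EJA.peirce (A : EJA J) (c : J) (μ : ℝ) : Submodule ℝ J :=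
  Module.End.eigenspace (A.mul c : Module.End ℝ J) μ

/-- A complete system of orthogonal idempotents. -/
def EJA.IsCSOI (A : EJA J) {k : ℕ} (c : Fin k → J) : Prop :=
  (∀ j, A.mul (c j) (c j) = c j) ∧ (∀ i j, i ≠ j → A.mul (c i) (c j) = 0) ∧
    (∑ j, c j) = A.one

/-- `y` is the Jordan inverse of `x`:  `x∘y = e` and `x²∘y = x`. -/
def EJA.IsInv (A : EJA J) (x y : J) : Prop :=
  A.mul x y = A.one ∧ A.mul (A.mul x x) y = x

/-- A (Jordan) derivation of `J`. -/
def EJA.IsDer (A : EJA J) (D : J →ₗ[ℝ] J) : Prop :=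
  ∀ x y : J, D (A.mul x y) = A.mul (D x) y + A.mul x (D y)

/-! For `x ∈ J₁(c_j)` and `w ∈ J₁(c_i)` with `i ≠ j`, the Peirce rule `J₁(c) ∘ J₀(c) = 0` gives
`x ∘ w = 0` and `c_i ∘ x = 0`. Associativity of the inner product then yields
`⟪v ∘ x, w⟫ = ⟪v, x ∘ w⟫ = 0` and, differentiating `c_i ∘ x = 0`,
`⟪D x, w⟫ = ⟪c_i ∘ D x, w⟫ = -⟪D c_i, x ∘ w⟫ = 0`. So `T x ∈ J(c)` is orthogonal to every `J₁(c_i)`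
with `i ≠ j`; as these spaces are pairwise orthogonal, `T x ∈ J₁(c_j)`. -/

theorem Submodule.mem_of_mem_iSup_of_mem_orthogonal {𝕜 E ι : Type*} [RCLike 𝕜]
    [NormedAddCommGroup E] [InnerProductSpace 𝕜 E] {V : ι → Submodule 𝕜 E}
    (hV : Pairwise fun i j => V i ⟂ V j) {j : ι} {y : E} (hy : y ∈ ⨆ i, V i)
    (hyV : ∀ i ≠ j, y ∈ (V i)ᗮ) : y ∈ V j := by
  set W := ⨆ (i) (_ : i ≠ j), V i
  have hVW : V j ≤ Wᗮ := isOrtho_iSup_right.2 fun i => isOrtho_iSup_right.2 fun hi => hV hi.symm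
  have hyW : y ∈ Wᗮ := (span_singleton_le_iff_mem y _).1 <| isOrtho_iSup_right.2 fun i =>
    isOrtho_iSup_right.2 fun hi => (span_singleton_le_iff_mem y _).2 (hyV i hi)
  rw [iSup_split_single V j] at hy
  have hy' := sup_inf_assoc_of_le W hVW ▸ mem_inf.2 ⟨hy, hyW⟩
  rwa [inf_orthogonal_eq_bot, sup_bot_eq] at hy'

namespace EJA

variable {E : Type} [NormedAddCommGroup E] [InnerProductSpace ℝ E] (A : EJA E)

theorem mem_peirce_iff {c a : E} {μ : ℝ} : a ∈ A.peirce c μ ↔ A.mul c a = μ • a :=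
  Module.End.mem_eigenspace_iff

theorem jordan_linearized (x z y : E) :
    A.mul (A.mul z y) (A.mul x x) + A.mul (A.mul x y) (A.mul x z) + A.mul (A.mul x y) (A.mul z x)
      = A.mul z (A.mul y (A.mul x x)) + A.mul x (A.mul y (A.mul x z))
          + A.mul x (A.mul y (A.mul z x)) := by
  have hplus := A.jordan (x + z) y
  have hminus := A.jordan (x - z) y
  have hz := A.jordan z y
  simp only [map_add, map_sub, LinearMap.add_apply, LinearMap.sub_apply] at hplus hminus hz
  linear_combination (norm := module) (2:ℝ)⁻¹ • (hplus - hminus) - hz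

variable {A}

/-- The linearized Jordan identity at `x = c` gives `(1 - 2μ) [L c, L a] = 0`. -/
theorem mul_mul_comm_of_mem_peirce {c a : E} {μ : ℝ} (hc : A.mul c c = c)
    (ha : a ∈ A.peirce c μ) (hμ : μ ≠ 1 / 2) (y : E) :
    A.mul c (A.mul a y) = A.mul a (A.mul c y) := by
  have h := A.jordan_linearized c a y
  rw [A.comm a c, hc, A.mem_peirce_iff.1 ha] at h
  simp only [map_smul] at h
  rw [A.comm (A.mul a y) c, A.comm (A.mul c y) a, A.comm y c, A.comm y a] at h
  have hcomm : (1 - 2 * μ) • (A.mul c (A.mul a y) - A.mul a (A.mul c y)) = 0 := by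
    linear_combination (norm := module) h
  have hμ' : (1 - 2 * μ : ℝ) ≠ 0 := by
    contrapose! hμ
    linarith
  exact sub_eq_zero.1 ((smul_eq_zero.1 hcomm).resolve_left hμ')

theorem mul_eq_zero_of_mem_peirce_one_of_mem_peirce_zero {c a b : E} (hc : A.mul c c = c)
    (ha : a ∈ A.peirce c 1) (hb : b ∈ A.peirce c 0) : A.mul a b = 0 := by
  have ha' : A.mul c a = a := by simpa using A.mem_peirce_iff.1 ha
  have hb' : A.mul c b = 0 := by simpa using A.mem_peirce_iff.1 hb
  calc A.mul a b = A.mul b (A.mul c a) := by rw [ha', A.comm]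
    _ = A.mul c (A.mul b a) := (mul_mul_comm_of_mem_peirce hc hb (by norm_num) a).symm
    _ = A.mul a (A.mul c b) := by rw [A.comm b a, mul_mul_comm_of_mem_peirce hc ha (by norm_num)]
    _ = 0 := by rw [hb', map_zero]

theorem IsDer.inner_apply_eq_zero {D : E →ₗ[ℝ] E} (hD : A.IsDer D) {c x w : E}
    (hcx : A.mul c x = 0) (hw : w ∈ A.peirce c 1) (hxw : A.mul x w = 0) : ⟪D x, w⟫ = 0 := by
  have hw' : A.mul c w = w := by simpa using A.mem_peirce_iff.1 hw
  have hDx : A.mul c (D x) = -A.mul (D c) x :=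
    eq_neg_of_add_eq_zero_right (by rw [← hD, hcx, map_zero])
  calc ⟪D x, w⟫ = ⟪A.mul c (D x), w⟫ := by rw [A.assoc_inner, hw']
    _ = -⟪D c, A.mul x w⟫ := by rw [hDx, inner_neg_left, A.comm, A.assoc_inner]
    _ = 0 := by rw [hxw, inner_zero_right, neg_zero]

namespace IsCSOI

variable {k : ℕ} {c : Fin k → E}

theorem mul_eq_zero_of_mem_peirce_one (hc : A.IsCSOI c) {i j : Fin k} (hij : i ≠ j) {a : E}
    (ha : a ∈ A.peirce (c j) 1) : A.mul (c i) a = 0 := by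
  have hci : c i ∈ A.peirce (c j) 0 := by
    rw [mem_peirce_iff, zero_smul]
    exact hc.2.1 j i hij.symm
  rw [A.comm]
  exact mul_eq_zero_of_mem_peirce_one_of_mem_peirce_zero (hc.1 j) ha hci

theorem mul_eq_zero_of_mem_peirce_one_of_ne (hc : A.IsCSOI c) {i j : Fin k} (hij : i ≠ j)
    {a b : E} (ha : a ∈ A.peirce (c i) 1) (hb : b ∈ A.peirce (c j) 1) : A.mul a b = 0 := by
  have hb' : b ∈ A.peirce (c i) 0 := by
    rw [mem_peirce_iff, zero_smul]
    exact hc.mul_eq_zero_of_mem_peirce_one hij hb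
  exact mul_eq_zero_of_mem_peirce_one_of_mem_peirce_zero (hc.1 i) ha hb'

theorem peirce_one_isOrtho (hc : A.IsCSOI c) :
    Pairwise fun i j => A.peirce (c i) 1 ⟂ A.peirce (c j) 1 := by
  intro i j hij
  refine Submodule.isOrtho_iff_inner_eq.2 fun a ha b hb => ?_
  rw [← one_smul ℝ a, ← A.mem_peirce_iff.1 ha, A.assoc_inner,
    hc.mul_eq_zero_of_mem_peirce_one hij hb, inner_zero_right]

end IsCSOI

end EJA

/-- If `T ∈ str(J) = Der(J) ⊕ {L(v)}` maps `J(c)` into itself, then `T` maps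
each Peirce subalgebra `J_j = J(c_j,1)` into itself. -/
theorem stmt5 (A : EJA J) (k : ℕ) (c : Fin k → J) (hc : A.IsCSOI c)
    (T : J →ₗ[ℝ] J)
    (hT : ∃ (D : J →ₗ[ℝ] J) (v : J), A.IsDer D ∧ T = D + A.mul v)
    (hJc : ∀ x ∈ ⨆ j, A.peirce (c j) 1, T x ∈ ⨆ j, A.peirce (c j) 1) :
    ∀ j, ∀ x ∈ A.peirce (c j) 1, T x ∈ A.peirce (c j) 1 := by
  obtain ⟨D, v, hD, rfl⟩ := hT
  intro j x hx
  refine Submodule.mem_of_mem_iSup_of_mem_orthogonal hc.peirce_one_isOrtho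
    (hJc x (Submodule.mem_iSup_of_mem j hx)) fun i hij => (Submodule.mem_orthogonal' _ _).2 ?_
  intro w hw
  have hxw : A.mul x w = 0 := hc.mul_eq_zero_of_mem_peirce_one_of_ne hij.symm hx hw
  rw [LinearMap.add_apply, inner_add_left,
    hD.inner_apply_eq_zero (hc.mul_eq_zero_of_mem_peirce_one hij hx) hw hxw,
    A.comm, A.assoc_inner, hxw, inner_zero_right, add_zero]
end

section
/- Let J be a Euclidean Jordan algebra with symmetric cone Ω, c = (c₁,…,c_k) a CSOI with Peirce subalgebras J_j and their symmetric cones Ω_j. For x_j ∈ J_j (j = 1,…,k), the element x = x₁ + ⋯ + x_k belongs to Ω if and only if x_j ∈ Ω_j for every j. -/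
open scoped RealInnerProductSpace

set_option linter.unusedSectionVars false

variable {J : Type} [NormedAddCommGroup J] [InnerProductSpace ℝ J] [FiniteDimensional ℝ J]

/-- The symmetric cone `Ω`: the set of squares of invertible elements. -/
def EJA.cone (A : EJA J) : Set J := {z | ∃ x y, A.IsInv x y ∧ z = A.mul x x}

/-!
Write `x = ∑ j, x j = w²` with `w` invertible. Decomposing the unit along the eigenspaces of the
symmetric operator `L_x` gives orthogonal idempotents `E μ`, polynomials in `x`, with
`x = ∑ μ • E μ`; each `μ` is positive because `‖E μ ∘ w‖² ≤ ⟪E μ ∘ w, w⟫ = μ ‖E μ‖²` and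
`E μ ∘ w ≠ 0`. Hence `y = ∑ √μ • E μ` is a square root of `x` with inverse `∑ (√μ)⁻¹ • E μ`.
Polynomials in `x` lie in `J₁ ⊕ ⋯ ⊕ J_k`, where `a ↦ c j ∘ a` is multiplicative, so `c j ∘ y`
is an invertible square root of `x j` in `J_j`. Conversely, `J_i ∘ J_j = 0` for `i ≠ j`, so
square roots and inverses in the `J_j` add up to ones in `J`.
-/

namespace EJA

variable (A : EJA J)

theorem mem_peirce {c x : J} {μ : ℝ} : x ∈ A.peirce c μ ↔ A.mul c x = μ • x :=
  Module.End.mem_eigenspace_iff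

theorem mem_peirce_one {c x : J} : x ∈ A.peirce c 1 ↔ A.mul c x = x := by
  rw [mem_peirce, one_smul]

theorem mem_peirce_zero {c x : J} : x ∈ A.peirce c 0 ↔ A.mul c x = 0 := by
  rw [mem_peirce, zero_smul]

theorem mul_one (x : J) : A.mul x A.one = x := by rw [A.comm, A.one_mul]

theorem jordan_polarized (x z w : J) :
    (2 : ℝ) • A.mul (A.mul x w) (A.mul x z) + A.mul (A.mul z w) (A.mul x x) =
      (2 : ℝ) • A.mul x (A.mul w (A.mul x z)) + A.mul z (A.mul w (A.mul x x)) := by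
  have h₁ := A.jordan (x + z) w
  have h₂ := A.jordan (x - z) w
  have h₃ := A.jordan z w
  simp only [map_add, map_sub, LinearMap.add_apply, LinearMap.sub_apply, A.comm z x] at h₁ h₂
  linear_combination (norm := module) (2⁻¹ : ℝ) • (h₁ - h₂) - h₃

section Idempotent

variable {A} {c : J} (hc : A.mul c c = c)
include hc

theorem mul_idem_cubic (a : J) :
    (3 : ℝ) • A.mul c (A.mul c a) = (2 : ℝ) • A.mul c (A.mul c (A.mul c a)) + A.mul c a := by
  have h := A.jordan_polarized c a c
  simp only [hc] at h
  rw [A.comm a c, A.comm (A.mul c a) c] at h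
  linear_combination (norm := module) h

theorem mul_mem_peirce_one {x y : J} (hx : x ∈ A.peirce c 1) (hy : y ∈ A.peirce c 1) :
    A.mul x y ∈ A.peirce c 1 := by
  rw [mem_peirce_one] at *
  have h := A.jordan_polarized c x y
  rw [hc, hx, A.comm y c, hy, A.comm y x, A.comm (A.mul x y) c] at h
  linear_combination (norm := module) (-1 : ℝ) • h

theorem mul_eq_zero_of_mem_peirce_one_of_mem_peirce_zero_s6 {x y : J} (hx : x ∈ A.peirce c 1)
    (hy : y ∈ A.peirce c 0) : A.mul x y = 0 := by
  rw [mem_peirce_one] at hx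
  rw [mem_peirce_zero] at hy
  have h₁ := A.jordan_polarized c y x
  have h₂ := A.jordan_polarized c x y
  rw [hc, hx, hy, A.comm x c, hx, A.comm y x, A.comm (A.mul x y) c] at h₁
  rw [hc, hx, A.comm y c, hy, A.comm y x, A.comm (A.mul x y) c] at h₂
  simp only [map_zero, LinearMap.zero_apply] at h₁ h₂
  linear_combination (norm := module) -h₁ - h₂

theorem mul_mul_comm_of_mul_eq_zero {d : J} (hcd : A.mul c d = 0) (a : J) :
    A.mul d (A.mul c a) = A.mul c (A.mul d a) := by
  have h := A.jordan_polarized c d a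
  rw [hcd, hc, A.comm a c, A.comm (A.mul d a) c] at h
  simpa using h.symm

theorem peirce_one_le_peirce_zero_of_orthogonal {d : J} (hd : A.mul d d = d)
    (hcd : A.mul c d = 0) : A.peirce c 1 ≤ A.peirce d 0 := by
  intro x hx
  rw [mem_peirce_one] at hx
  rw [mem_peirce_zero]
  have hdx : A.mul c (A.mul d x) = A.mul d x := by
    rw [← mul_mul_comm_of_mul_eq_zero hc hcd, hx]
  have hddx : A.mul c (A.mul d (A.mul d x)) = A.mul d (A.mul d x) := by
    rw [← mul_mul_comm_of_mul_eq_zero hc hcd, hdx]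
  have hsum : A.mul (c + d) (c + d) = c + d := by
    simp only [map_add, LinearMap.add_apply, hc, hd, hcd, A.comm d c]
    abel
  have e₁ := mul_idem_cubic hsum x
  have e₂ := mul_idem_cubic hd x
  simp only [map_add, LinearMap.add_apply, hx, hdx, hddx] at e₁
  have hdd : A.mul d (A.mul d x) = 0 := by
    linear_combination (norm := module) (6⁻¹ : ℝ) • (e₂ - e₁)
  simpa [hdd] using e₂.symm

theorem norm_mul_sq_le_inner_mul (w : J) : ‖A.mul c w‖ ^ 2 ≤ ⟪A.mul c w, w⟫ := by
  set T : J →ₗ[ℝ] J := A.mul c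
  have hT : ∀ u v : J, ⟪T u, v⟫ = ⟪u, T v⟫ := A.assoc_inner c
  have cubic : ∀ u, 2 * ⟪T (T (T u)), w⟫ = 3 * ⟪T (T u), w⟫ - ⟪T u, w⟫ := fun u => by
    rw [← real_inner_smul_left, ← real_inner_smul_left, ← inner_sub_left, mul_idem_cubic hc u,
      add_sub_cancel_right]
  -- `4 (T - T²)² = T - T²` on `J`, so `⟪T w, w⟫ - ‖T w‖² = 4 ‖T w - T² w‖²`.
  have hsq := norm_sub_sq_real (T w) (T (T w))
  simp only [← real_inner_self_eq_norm_sq] at hsq ⊢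
  have := real_inner_self_nonneg (x := T w - T (T w))
  linarith [cubic w, cubic (T w), hT (T w) w, hT (T (T w)) w, hT (T (T w)) (T w),
    hT (T (T (T w))) w, real_inner_comm (T w) (T (T w))]

end Idempotent

def jpow (X : J) : ℕ → J
  | 0 => A.one
  | n + 1 => A.mul X (jpow X n)

def powSpan (X : J) : Submodule ℝ J :=
  Submodule.span ℝ (Set.range (A.jpow X))

theorem jpow_zero (X : J) : A.jpow X 0 = A.one := rfl

theorem jpow_succ (X : J) (n : ℕ) : A.jpow X (n + 1) = A.mul X (A.jpow X n) := rfl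

theorem jpow_two (X : J) : A.jpow X 2 = A.mul X X := by
  rw [jpow_succ, jpow_succ, jpow_zero, mul_one]

theorem mul_self_mul_jpow (X : J) : ∀ n, A.mul (A.mul X X) (A.jpow X n) = A.jpow X (n + 2)
  | 0 => by rw [jpow_zero, mul_one, jpow_two]
  | n + 1 => by
    rw [A.comm, jpow_succ, A.jordan, A.comm (A.jpow X n), mul_self_mul_jpow X n, ← jpow_succ]

theorem jpow_add (X : J) (m n : ℕ) : A.jpow X (m + n) = A.mul (A.jpow X m) (A.jpow X n) := by
  induction m generalizing n with
  | zero => rw [jpow_zero, A.one_mul, Nat.zero_add]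
  | succ m ihm =>
    induction n with
    | zero => rw [jpow_zero, mul_one, Nat.add_zero]
    | succ n ihn =>
      -- the linearized Jordan identity at `(X, X^m, X^n)` relates `X^(m+1) ∘ X^(n+1)` to
      -- products of lower total degree
      have h := A.jordan_polarized X (A.jpow X m) (A.jpow X n)
      simp only [← jpow_succ, ← ihm, A.comm _ (A.mul X X), mul_self_mul_jpow, A.comm (A.jpow X n),
        ← ihn] at h
      rw [show m + 1 + n + 1 = m + (n + 2) by omega, show m + n + 2 = m + (n + 2) by omega] at h
      rw [show m + 1 + (n + 1) = m + (n + 2) by omega, A.comm]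
      linear_combination (norm := module) (-2⁻¹ : ℝ) • h

theorem jpow_mem_powSpan (X : J) (n : ℕ) : A.jpow X n ∈ A.powSpan X :=
  Submodule.subset_span ⟨n, rfl⟩

theorem mul_mul_of_mem_powSpan {X a b : J} (ha : a ∈ A.powSpan X) (hb : b ∈ A.powSpan X) :
    A.mul X (A.mul a b) = A.mul (A.mul X a) b := by
  have hpow : ∀ m, ∀ b ∈ A.powSpan X, A.mul X (A.mul (A.jpow X m) b) =
      A.mul (A.mul X (A.jpow X m)) b := by
    intro m b hb
    refine LinearMap.eqOn_span' (f := (A.mul X).comp (A.mul (A.jpow X m)))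
      (g := A.mul (A.mul X (A.jpow X m))) ?_ hb
    rintro _ ⟨n, rfl⟩
    simp only [LinearMap.comp_apply, ← jpow_add, ← jpow_succ]
    rw [Nat.succ_add]
  refine LinearMap.eqOn_span' (f := (A.mul X).comp (A.mul.flip b))
    (g := (A.mul.flip b).comp (A.mul X)) ?_ ha
  rintro _ ⟨m, rfl⟩
  exact hpow m b hb

theorem aeval_apply_one_mem_powSpan (X : J) (p : Polynomial ℝ) :
    Polynomial.aeval (A.mul X : Module.End ℝ J) p A.one ∈ A.powSpan X := by
  induction p using Polynomial.induction_on' with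
  | add p q hp hq => rw [map_add, LinearMap.add_apply]; exact add_mem hp hq
  | monomial n a =>
    have hpow : ((A.mul X : Module.End ℝ J) ^ n) A.one = A.jpow X n := by
      induction n with
      | zero => rfl
      | succ n ih => rw [pow_succ', Module.End.mul_apply, ih]; rfl
    rw [Polynomial.aeval_monomial, Module.End.mul_apply, hpow, Module.algebraMap_end_apply]
    exact Submodule.smul_mem _ _ (A.jpow_mem_powSpan X n)

theorem exists_eigen_decomposition_one (X : J) :
    ∃ (S : Finset ℝ) (E : ℝ → J), ∑ μ ∈ S, E μ = A.one ∧
      ∀ μ ∈ S, E μ ≠ 0 ∧ E μ ∈ A.powSpan X ∧ A.mul X (E μ) = μ • E μ := by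
  classical
  set L : Module.End ℝ J := A.mul X
  have hL : L.IsSymmetric := A.assoc_inner X
  have hone : A.one ∈ ⨆ μ : ℝ, Module.End.eigenspace L μ := by
    rw [Submodule.orthogonal_eq_bot_iff.mp hL.orthogonalComplement_iSup_eigenspaces_eq_bot]
    trivial
  obtain ⟨f, hf⟩ := (Submodule.mem_iSup_iff_exists_dfinsupp' _ _).mp hone
  replace hf : ∑ μ ∈ f.support, (f μ : J) = A.one := hf
  have hne : ∀ μ ∈ f.support, (f μ : J) ≠ 0 := fun μ hμ h0 =>
    DFinsupp.mem_support_iff.mp hμ (ZeroMemClass.coe_eq_zero.mp h0)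
  refine ⟨f.support, fun μ => f μ, hf, fun μ hμ =>
    ⟨hne μ hμ, ?_, Module.End.mem_eigenspace_iff.mp (f μ).2⟩⟩
  -- the Lagrange polynomial of `μ` on the spectrum, evaluated at `L`, projects `one` onto `f μ`
  have hproj : Polynomial.aeval L (Lagrange.basis f.support id μ) A.one = f μ := by
    rw [← hf, map_sum, Finset.sum_eq_single μ]
    · rw [Module.End.aeval_apply_of_hasEigenvector ⟨(f μ).2, hne μ hμ⟩,
        show (Lagrange.basis f.support id μ).eval μ = 1 from
          Lagrange.eval_basis_self (Set.injOn_id _) hμ, one_smul]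
    · intro ν hν hνμ
      rw [Module.End.aeval_apply_of_hasEigenvector ⟨(f ν).2, hne ν hν⟩,
        show (Lagrange.basis f.support id μ).eval ν = 0 from
          Lagrange.eval_basis_of_ne (v := id) (Ne.symm hνμ) hν, zero_smul]
    · exact absurd hμ
  show (f μ : J) ∈ _
  rw [← hproj]
  exact A.aeval_apply_one_mem_powSpan X _

theorem mul_eq_zero_of_eigenvalue_ne {X a b : J} {μ ν : ℝ} (ha : a ∈ A.powSpan X)
    (hb : b ∈ A.powSpan X) (hXa : A.mul X a = μ • a) (hXb : A.mul X b = ν • b) (hμν : μ ≠ ν) :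
    A.mul a b = 0 := by
  have h₁ : A.mul X (A.mul a b) = μ • A.mul a b := by
    rw [A.mul_mul_of_mem_powSpan ha hb, hXa, map_smul, LinearMap.smul_apply]
  have h₂ : A.mul X (A.mul a b) = ν • A.mul a b := by
    rw [A.comm a b, A.mul_mul_of_mem_powSpan hb ha, hXb, map_smul, LinearMap.smul_apply]
  have h₃ : (μ - ν) • A.mul a b = 0 := by rw [sub_smul, ← h₁, ← h₂, sub_self]
  exact (smul_eq_zero.mp h₃).resolve_left (sub_ne_zero.mpr hμν)

theorem sum_smul_mul_sum_smul {S : Finset ℝ} {E : ℝ → J}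
    (hE : ∀ μ ∈ S, ∀ ν ∈ S, A.mul (E μ) (E ν) = if μ = ν then E μ else 0) (a b : ℝ → ℝ) :
    A.mul (∑ μ ∈ S, a μ • E μ) (∑ ν ∈ S, b ν • E ν) = ∑ μ ∈ S, (a μ * b μ) • E μ := by
  simp only [map_sum, map_smul, LinearMap.sum_apply, LinearMap.smul_apply]
  refine Finset.sum_congr rfl fun μ hμ => ?_
  rw [Finset.sum_congr rfl fun ν hν => by rw [hE ν hν μ hμ, smul_ite, smul_zero],
    Finset.sum_ite_eq', if_pos hμ, smul_smul, mul_comm]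

theorem eigenvalue_pos_of_mul_eq_one {w v e : J} {μ : ℝ} (hwv : A.mul w v = A.one)
    (he : A.mul e e = e) (he0 : e ≠ 0) (hXe : A.mul (A.mul w w) e = μ • e) : 0 < μ := by
  have hew : A.mul e w ≠ 0 := by
    intro h
    apply he0
    rw [← inner_self_eq_zero (𝕜 := ℝ)]
    calc ⟪e, e⟫ = ⟪A.mul e e, A.one⟫ := by rw [A.assoc_inner, A.mul_one]
      _ = ⟪v, A.mul w e⟫ := by rw [he, ← hwv, real_inner_comm, A.assoc_inner]
      _ = 0 := by rw [A.comm, h, inner_zero_right]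
  have hle : ‖A.mul e w‖ ^ 2 ≤ μ * ‖e‖ ^ 2 :=
    calc ‖A.mul e w‖ ^ 2 ≤ ⟪A.mul e w, w⟫ := norm_mul_sq_le_inner_mul he w
      _ = ⟪A.mul e e, A.mul w w⟫ := by rw [he, A.comm e w, A.assoc_inner]
      _ = μ * ‖e‖ ^ 2 := by
        rw [A.assoc_inner, A.comm e, hXe, real_inner_smul_right, real_inner_self_eq_norm_sq]
  have := norm_pos_iff.mpr hew
  have := norm_pos_iff.mpr he0
  nlinarith

theorem exists_sqrt_mem_powSpan {w v : J} (hwv : A.mul w v = A.one) :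
    ∃ y ∈ A.powSpan (A.mul w w), ∃ z ∈ A.powSpan (A.mul w w),
      A.mul y z = A.one ∧ A.mul y y = A.mul w w ∧ A.mul (A.mul w w) z = y := by
  set X := A.mul w w
  obtain ⟨S, E, hsum, hE⟩ := A.exists_eigen_decomposition_one X
  choose hE0 hEX hXE using hE
  have horth : ∀ μ ∈ S, ∀ ν ∈ S, μ ≠ ν → A.mul (E μ) (E ν) = 0 := fun μ hμ ν hν =>
    A.mul_eq_zero_of_eigenvalue_ne (hEX μ hμ) (hEX ν hν) (hXE μ hμ) (hXE ν hν)
  have hidem : ∀ μ ∈ S, A.mul (E μ) (E μ) = E μ := by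
    intro μ hμ
    have h := A.one_mul (E μ)
    rwa [← hsum, map_sum, LinearMap.sum_apply, Finset.sum_eq_single_of_mem μ hμ
      fun ν hν hνμ => horth ν hν μ hμ hνμ] at h
  have hE : ∀ μ ∈ S, ∀ ν ∈ S, A.mul (E μ) (E ν) = if μ = ν then E μ else 0 := by
    intro μ hμ ν hν
    split_ifs with h
    · rw [← h, hidem μ hμ]
    · exact horth μ hμ ν hν h
  have hpos : ∀ μ ∈ S, 0 < μ := fun μ hμ =>
    A.eigenvalue_pos_of_mul_eq_one hwv (hidem μ hμ) (hE0 μ hμ) (hXE μ hμ)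
  have hone : A.one = ∑ μ ∈ S, (1 : ℝ) • E μ := by simp only [one_smul, hsum]
  have hX : X = ∑ μ ∈ S, μ • E μ := by
    rw [← A.mul_one X, ← hsum, map_sum]
    exact Finset.sum_congr rfl hXE
  have hspan : ∀ a : ℝ → ℝ, ∑ μ ∈ S, a μ • E μ ∈ A.powSpan X := fun a =>
    Submodule.sum_mem _ fun μ hμ => Submodule.smul_mem _ _ (hEX μ hμ)
  refine ⟨∑ μ ∈ S, √μ • E μ, hspan _, ∑ μ ∈ S, (√μ)⁻¹ • E μ, hspan _, ?_, ?_, ?_⟩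
  · rw [A.sum_smul_mul_sum_smul hE, hone]
    refine Finset.sum_congr rfl fun μ hμ => ?_
    rw [mul_inv_cancel₀ (Real.sqrt_pos.mpr (hpos μ hμ)).ne']
  · rw [A.sum_smul_mul_sum_smul hE, hX]
    refine Finset.sum_congr rfl fun μ hμ => ?_
    rw [Real.mul_self_sqrt (hpos μ hμ).le]
  · rw [hX, A.sum_smul_mul_sum_smul hE]
    refine Finset.sum_congr rfl fun μ hμ => ?_
    congr 1
    rw [← div_eq_mul_inv, Real.div_sqrt]

-- For a CSOI `c` this is `J₁ ⊕ ⋯ ⊕ J_k`, because then `a = ∑ j, c j ∘ a`.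
def peirceDiag {k : ℕ} (c : Fin k → J) : Submodule ℝ J where
  carrier := {a | ∀ j, A.mul (c j) a ∈ A.peirce (c j) 1}
  add_mem' ha hb j := by rw [map_add]; exact add_mem (ha j) (hb j)
  zero_mem' j := by rw [map_zero]; exact zero_mem _
  smul_mem' r _ ha j := by rw [map_smul]; exact Submodule.smul_mem _ r (ha j)

namespace IsCSOI

variable {A} {k : ℕ} {c : Fin k → J} (hc : A.IsCSOI c)
include hc

theorem mem_peirce_zero_of_ne {i j : Fin k} (hij : i ≠ j) {a : J} (ha : a ∈ A.peirce (c j) 1) :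
    a ∈ A.peirce (c i) 0 :=
  peirce_one_le_peirce_zero_of_orthogonal (hc.1 j) (hc.1 i) (hc.2.1 j i hij.symm) ha

theorem sum_mul_sum {x y : Fin k → J} (hx : ∀ j, x j ∈ A.peirce (c j) 1)
    (hy : ∀ j, y j ∈ A.peirce (c j) 1) :
    A.mul (∑ i, x i) (∑ j, y j) = ∑ j, A.mul (x j) (y j) := by
  simp only [map_sum, LinearMap.sum_apply]
  refine Finset.sum_congr rfl fun j _ => Finset.sum_eq_single j (fun i _ hij => ?_) (by simp)
  exact mul_eq_zero_of_mem_peirce_one_of_mem_peirce_zero_s6 (hc.1 i) (hx i)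
    (hc.mem_peirce_zero_of_ne hij (hy j))

theorem mul_sum_of_mem_peirce {x : Fin k → J} (hx : ∀ j, x j ∈ A.peirce (c j) 1) (j : Fin k) :
    A.mul (c j) (∑ i, x i) = x j := by
  rw [map_sum, Finset.sum_eq_single j
    (fun i _ hij => A.mem_peirce_zero.mp (hc.mem_peirce_zero_of_ne hij.symm (hx i))) (by simp)]
  exact A.mem_peirce_one.mp (hx j)

theorem sum_mul_self (a : J) : ∑ j, A.mul (c j) a = a := by
  rw [← LinearMap.sum_apply, ← map_sum, hc.2.2, A.one_mul]

theorem mul_mul_of_mem_peirceDiag {a b : J} (ha : a ∈ A.peirceDiag c)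
    (hb : b ∈ A.peirceDiag c) (j : Fin k) :
    A.mul (c j) (A.mul a b) = A.mul (A.mul (c j) a) (A.mul (c j) b) := by
  conv_lhs => rw [← hc.sum_mul_self a, ← hc.sum_mul_self b, hc.sum_mul_sum ha hb]
  exact hc.mul_sum_of_mem_peirce (fun i => mul_mem_peirce_one (hc.1 i) (ha i) (hb i)) j

theorem mul_mem_peirceDiag {a b : J} (ha : a ∈ A.peirceDiag c) (hb : b ∈ A.peirceDiag c) :
    A.mul a b ∈ A.peirceDiag c := fun j => by
  rw [hc.mul_mul_of_mem_peirceDiag ha hb]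
  exact mul_mem_peirce_one (hc.1 j) (ha j) (hb j)

theorem powSpan_le_peirceDiag {X : J} (hX : X ∈ A.peirceDiag c) :
    A.powSpan X ≤ A.peirceDiag c := by
  rw [powSpan, Submodule.span_le]
  rintro _ ⟨n, rfl⟩
  induction n with
  | zero => exact fun j => by rw [jpow_zero, A.mul_one]; exact A.mem_peirce_one.mpr (hc.1 j)
  | succ n ih => exact hc.mul_mem_peirceDiag hX ih

theorem sum_mem_peirceDiag {x : Fin k → J} (hx : ∀ j, x j ∈ A.peirce (c j) 1) :
    ∑ j, x j ∈ A.peirceDiag c := fun j => by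
  rw [hc.mul_sum_of_mem_peirce hx]
  exact hx j

end IsCSOI

end EJA

/-- For `x_j ∈ J_j`, the sum `x₁ + ⋯ + x_k` lies in `Ω` iff each `x_j` lies in
the symmetric cone `Ω_j` of `J_j` (squares of elements of `J_j` invertible in
`J_j`, whose unit is `c_j`). -/
theorem stmt6 (A : EJA J) (k : ℕ) (c : Fin k → J) (hc : A.IsCSOI c)
    (x : Fin k → J) (hx : ∀ j, x j ∈ A.peirce (c j) 1) :
    (∑ j, x j) ∈ A.cone ↔
      ∀ j, ∃ y ∈ A.peirce (c j) 1,
        (∃ z ∈ A.peirce (c j) 1, A.mul y z = c j ∧ A.mul (A.mul y y) z = y) ∧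
        x j = A.mul y y := by
  constructor
  · rintro ⟨w, v, ⟨hwv, -⟩, hX⟩
    obtain ⟨y, hy, z, hz, hyz, hyy, hXz⟩ := A.exists_sqrt_mem_powSpan hwv
    rw [← hX] at hy hz hyy hXz
    have hdiag := hc.powSpan_le_peirceDiag (hc.sum_mem_peirceDiag hx)
    replace hy := hdiag hy
    replace hz := hdiag hz
    intro j
    refine ⟨A.mul (c j) y, hy j, ⟨A.mul (c j) z, hz j, ?_, ?_⟩, ?_⟩
    · rw [← hc.mul_mul_of_mem_peirceDiag hy hz, hyz, A.mul_one]
    · rw [← hc.mul_mul_of_mem_peirceDiag hy hy,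
        ← hc.mul_mul_of_mem_peirceDiag (hc.mul_mem_peirceDiag hy hy) hz, hyy, hXz]
    · rw [← hc.mul_mul_of_mem_peirceDiag hy hy, hyy, hc.mul_sum_of_mem_peirce hx]
  · intro h
    choose y hy hyz hxy using h
    choose z hz hyz hyyz using hyz
    have hyy j : A.mul (y j) (y j) ∈ A.peirce (c j) 1 :=
      EJA.mul_mem_peirce_one (hc.1 j) (hy j) (hy j)
    refine ⟨∑ j, y j, ∑ j, z j, ⟨?_, ?_⟩, ?_⟩
    · rw [hc.sum_mul_sum hy hz, ← hc.2.2]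
      exact Finset.sum_congr rfl fun j _ => hyz j
    · rw [hc.sum_mul_sum hy hy, hc.sum_mul_sum hyy hz]
      exact Finset.sum_congr rfl fun j _ => hyyz j
    · rw [hc.sum_mul_sum hy hy]
      exact Finset.sum_congr rfl fun j _ => hxy j
end
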